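/- arXiv:2211.04651 — 5 statements merged into one kernel-verified Lean document; each statement's English description precedes it below -/
import Mathlib

section
/- Let a and s be configurations such that for every i ∈ ℤ the set {P[s](j) − P[a](j) : j ≤ i} is bounded above (equivalently, (a,s) has finite queue lengths). Then for every i ∈ ℤ, P[D(a,s)](i) = P[s](i) + sup_{j ≤ 0} (P[s](j) − P[a](j)) − sup_{j ≤ i} (P[s](j) − P[a](j)). -/
open scoped BigOperators

/-- A particle configuration on `ℤ`: a `{0,1}`-valued function. -/
abbrev Config := ℤ → ℤ

/-- `x` takes only the values `0` and `1`. -/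
def IsConfig (x : Config) : Prop := ∀ i, x i = 0 ∨ x i = 1

/-- `x[i,j] = ∑_{k=i}^j x(k)` (zero if `j < i`). -/
noncomputable def cnt (x : Config) (i j : ℤ) : ℤ := ∑ k ∈ Finset.Icc i j, x k

/-- The queue length `Q_i(a,s) = sup_{j ≤ i} max(a[j,i] - s[j,i], 0)`. -/
noncomputable def queue (a s : Config) (i : ℤ) : ℤ :=
  sSup {q : ℤ | ∃ j ≤ i, q = max (cnt a j i - cnt s j i) 0}

/-- The departure configuration `D(a,s)`. -/
noncomputable def dep (a s : Config) : Config := fun i =>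
  if s i = 1 ∧ (0 < queue a s (i - 1) ∨ a i = 1) then 1 else 0

/-- The height function `P[x]`. -/
noncomputable def Pmap (x : Config) : ℤ → ℤ := fun i =>
  if 0 ≤ i then ∑ j ∈ Finset.Ico (0 : ℤ) i, (2 * x j - 1)
  else -∑ j ∈ Finset.Ico i (0 : ℤ), (2 * x j - 1)
/-!
Write `G j = P[s](j) − P[a](j)` and `M i = sup_{j ≤ i} G j`. Since
`2 (a[j,i] − s[j,i]) = G j − G (i+1)`, the queue satisfies `2 Q_i = M (i+1) − G (i+1)`:
the queue is half the distance of `G` below its running maximum. Checking the four cases of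
`(a i, s i)` shows `2 D(i) + M (i+1) = 2 s i + M i`, i.e. `P[D] − P[s] + M` is constant in `i`,
and its value at `0` is `M 0`.
-/

open Finset

section PrefixSup

noncomputable def prefixSup {α : Type*} [SupSet α] (G : ℤ → α) (i : ℤ) : α :=
  sSup {v | ∃ j ≤ i, v = G j}

lemma prefixSet_nonempty {α : Type*} (G : ℤ → α) (i : ℤ) : {v | ∃ j ≤ i, v = G j}.Nonempty :=
  ⟨G i, i, le_rfl, rfl⟩

variable {α : Type*} [ConditionallyCompleteLinearOrder α] {G : ℤ → α}

lemma le_prefixSup (hG : ∀ i, BddAbove {v | ∃ j ≤ i, v = G j}) {i j : ℤ} (hji : j ≤ i) :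
    G j ≤ prefixSup G i :=
  le_csSup (hG i) ⟨j, hji, rfl⟩

lemma prefixSup_add_one (hG : ∀ i, BddAbove {v | ∃ j ≤ i, v = G j}) (i : ℤ) :
    prefixSup G (i + 1) = max (prefixSup G i) (G (i + 1)) := by
  apply le_antisymm
  · refine csSup_le (prefixSet_nonempty G _) ?_
    rintro v ⟨j, hj, rfl⟩
    rcases Int.le_add_one_iff.mp hj with hji | rfl
    · exact (le_prefixSup hG hji).trans (le_max_left _ _)
    · exact le_max_right _ _
  · refine max_le (csSup_le (prefixSet_nonempty G _) ?_) (le_prefixSup hG le_rfl)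
    rintro v ⟨j, hj, rfl⟩
    exact le_prefixSup hG (by omega)

lemma exists_eq_prefixSup {G : ℤ → ℤ} (hG : ∀ i, BddAbove {v | ∃ j ≤ i, v = G j}) (i : ℤ) :
    ∃ j ≤ i, prefixSup G i = G j :=
  Int.csSup_mem (prefixSet_nonempty G i) (hG i)

end PrefixSup

lemma Pmap_zero (x : Config) : Pmap x 0 = 0 := by
  simp [Pmap]

lemma Pmap_sub_Pmap (x : Config) {j m : ℤ} (hjm : j ≤ m) :
    Pmap x m - Pmap x j = ∑ k ∈ Ico j m, (2 * x k - 1) := by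
  have split {l n k : ℤ} (hln : l ≤ n) (hnk : n ≤ k) :
      ∑ i ∈ Ico l k, (2 * x i - 1) = ∑ i ∈ Ico l n, (2 * x i - 1) + ∑ i ∈ Ico n k, (2 * x i - 1) := by
    rw [← sum_union (Ico_disjoint_Ico_consecutive l n k), Ico_union_Ico_eq_Ico hln hnk]
  unfold Pmap
  rcases le_or_gt 0 j with hj | hj
  · rw [if_pos hj, if_pos (hj.trans hjm), split hj hjm]
    ring
  rw [if_neg hj.not_ge]
  rcases le_or_gt 0 m with hm | hm
  · rw [if_pos hm, split hj.le hm]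
    ring
  · rw [if_neg hm.not_ge, split hjm hm.le]
    ring

lemma Pmap_add_one (x : Config) (i : ℤ) : Pmap x (i + 1) = Pmap x i + (2 * x i - 1) := by
  have h := Pmap_sub_Pmap x (Int.le_add_one (le_refl i))
  rw [Ico_add_one_right_eq_Icc, Icc_self, sum_singleton] at h
  linarith

noncomputable def heightGap (a s : Config) (j : ℤ) : ℤ := Pmap s j - Pmap a j

lemma two_mul_cnt_sub_cnt (a s : Config) {i j : ℤ} (hji : j ≤ i + 1) :
    2 * (cnt a j i - cnt s j i) = heightGap a s j - heightGap a s (i + 1) := by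
  have hsum : 2 * (cnt a j i - cnt s j i) =
      ∑ k ∈ Ico j (i + 1), (2 * a k - 1) - ∑ k ∈ Ico j (i + 1), (2 * s k - 1) := by
    rw [cnt, cnt, ← Ico_add_one_right_eq_Icc, mul_sub, mul_sum, mul_sum,
      ← sum_sub_distrib, ← sum_sub_distrib]
    exact sum_congr rfl fun k _ => by ring
  rw [hsum, ← Pmap_sub_Pmap a hji, ← Pmap_sub_Pmap s hji, heightGap, heightGap]
  ring

section Queue

variable {a s : Config} (hbdd : ∀ i, BddAbove {v | ∃ j ≤ i, v = heightGap a s j})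
include hbdd

lemma two_mul_queue (i : ℤ) :
    2 * queue a s i = prefixSup (heightGap a s) (i + 1) - heightGap a s (i + 1) := by
  obtain ⟨j₀, hj₀, hmax⟩ := exists_eq_prefixSup hbdd i
  have hqueue : queue a s i = max (cnt a j₀ i - cnt s j₀ i) 0 := by
    refine IsGreatest.csSup_eq ⟨⟨j₀, hj₀, rfl⟩, ?_⟩
    rintro q ⟨j, hj, rfl⟩
    have hj_le := le_prefixSup hbdd hj
    have hj_cnt := two_mul_cnt_sub_cnt a s (show j ≤ i + 1 by omega)
    have hj₀_cnt := two_mul_cnt_sub_cnt a s (show j₀ ≤ i + 1 by omega)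
    exact max_le_max (by omega) le_rfl
  have hj₀_cnt := two_mul_cnt_sub_cnt a s (show j₀ ≤ i + 1 by omega)
  rw [prefixSup_add_one hbdd, hqueue]
  omega

lemma two_mul_dep_add_prefixSup (ha : IsConfig a) (hs : IsConfig s) (i : ℤ) :
    2 * dep a s i + prefixSup (heightGap a s) (i + 1) = 2 * s i + prefixSup (heightGap a s) i := by
  have hqueue := two_mul_queue hbdd (i - 1)
  rw [sub_add_cancel] at hqueue
  have hgap_le := le_prefixSup hbdd (le_refl i)
  have hgap : heightGap a s (i + 1) = heightGap a s i + 2 * s i - 2 * a i := by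
    simp only [heightGap, Pmap_add_one]
    ring
  have ha_i := ha i
  have hs_i := hs i
  rw [prefixSup_add_one hbdd, hgap, dep]
  split_ifs <;> omega

end Queue

/-- If for every `i` the set `{P[s](j) − P[a](j) : j ≤ i}` is bounded above
(equivalently, `(a,s)` has finite queue lengths), then for every `i`,
`P[D(a,s)](i) = P[s](i) + sup_{j ≤ 0}(P[s](j) − P[a](j)) − sup_{j ≤ i}(P[s](j) − P[a](j))`. -/
theorem stmt0 (a s : Config) (ha : IsConfig a) (hs : IsConfig s)
    (hbdd : ∀ i : ℤ, BddAbove {v : ℤ | ∃ j ≤ i, v = Pmap s j - Pmap a j}) :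
    ∀ i : ℤ,
      Pmap (dep a s) i =
        Pmap s i + sSup {v : ℤ | ∃ j ≤ (0 : ℤ), v = Pmap s j - Pmap a j}
          - sSup {v : ℤ | ∃ j ≤ i, v = Pmap s j - Pmap a j} := by
  intro i
  change Pmap (dep a s) i = Pmap s i + prefixSup (heightGap a s) 0 - prefixSup (heightGap a s) i
  have hconst : Function.Periodic
      (fun i => Pmap (dep a s) i - Pmap s i + prefixSup (heightGap a s) i) 1 := fun i => by
    have hstep := two_mul_dep_add_prefixSup hbdd ha hs i
    simp only [Pmap_add_one]
    linarith
  have hvalue := (hconst.int_mul i).eq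
  simp only [mul_one, Int.cast_id, Pmap_zero] at hvalue
  linarith
end

section
/- Let a and s be configurations such that (a,s) has finite queue lengths. Then for all integers j ≤ i, D(a,s)[j,i] = Q_{j−1}(a,s) − Q_i(a,s) + a[j,i]. -/
open scoped BigOperators

/-- `(a,s)` has finite queue lengths. -/
def FinQ (a s : Config) : Prop :=
  ∀ i : ℤ, BddAbove {v : ℤ | ∃ j ≤ i, v = cnt a j i - cnt s j i}

/-- The unused-service configuration `U(a,s)`. -/
noncomputable def unusedSrv (a s : Config) : Config := fun i =>
  if s i = 1 ∧ queue a s (i - 1) = 0 ∧ a i = 0 then 1 else 0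

/-- `R(a,s)(i) = a(i) + U(a,s)(i)`. -/
noncomputable def Rmap (a s : Config) : Config := fun i => a i + unusedSrv a s i

/-- Truncation: `x_{n,0}(i) = x(i)` for `i ≥ n`, `0` otherwise. -/
def trunc (x : Config) (n : ℤ) : Config := fun i => if n ≤ i then x i else 0

/-- Left-peeling tandem queue: `Dtandem x [s₁,…,s_k] = D(…D(D(x,s₁),s₂)…,s_k)`. -/
noncomputable def Dtandem : Config → List Config → Config
  | x, [] => x
  | x, s :: rest => Dtandem (dep x s) rest

/-- `DtandemList [x₁,…,xₙ] = Dⁿ(x₁,…,xₙ)`. -/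
noncomputable def DtandemList : List Config → Config
  | [] => fun _ => 0
  | x :: rest => Dtandem x rest

/-- `DtandemN x = Dⁿ(x 0, …, x (n-1))`. -/
noncomputable def DtandemN {n : ℕ} (x : Fin n → Config) : Config :=
  DtandemList (List.ofFn x)

/-- Every pair appearing as (arrivals, services) in the recursive definition of the
tandem departure map has finite queue lengths. -/
def TandemFinQ : List Config → Prop
  | [] => True
  | [_] => True
  | x :: s :: rest => FinQ x s ∧ TandemFinQ (dep x s :: rest)
  termination_by l => l.length

/-!
Lindley's recursion `Q_i = max(Q_{i-1} + a(i) - s(i), 0)` shows, by checking the four values of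
`(a(i), s(i))`, that `D(a,s)(i) = Q_{i-1} - Q_i + a(i)` at every site `i`; summing over `[j,i]`
telescopes.
-/

lemma cnt_add_one (x : Config) {j i : ℤ} (h : j ≤ i + 1) :
    cnt x j (i + 1) = cnt x j i + x (i + 1) := by
  rw [cnt, ← Finset.insert_Icc_right_eq_Icc_add_one h,
    Finset.sum_insert (by simp), add_comm, cnt]

lemma cnt_self (x : Config) (i : ℤ) : cnt x i i = x i := by
  simp [cnt]

lemma cnt_telescope {x y : Config} (f : ℤ → ℤ) (hxy : ∀ k, x k = f (k - 1) - f k + y k)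
    {i j : ℤ} (hji : j - 1 ≤ i) : cnt x j i = f (j - 1) - f i + cnt y j i := by
  induction i, hji using Int.leInduction with
  | base => simp [cnt]
  | succ i hji ih =>
    rw [cnt_add_one x (by omega), cnt_add_one y (by omega), ih, hxy, add_sub_cancel_right]
    ring

lemma queue_le_iff {a s : Config} (hfq : FinQ a s) (i c : ℤ) :
    queue a s i ≤ c ↔ 0 ≤ c ∧ ∀ j ≤ i, cnt a j i - cnt s j i ≤ c := by
  obtain ⟨B, hB⟩ := hfq i
  have hbdd : BddAbove {q : ℤ | ∃ j ≤ i, q = max (cnt a j i - cnt s j i) 0} :=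
    ⟨max B 0, by rintro _ ⟨j, hj, rfl⟩; exact max_le_max_right 0 (hB ⟨j, hj, rfl⟩)⟩
  rw [queue, csSup_le_iff hbdd ⟨_, i, le_rfl, rfl⟩]
  constructor
  · intro h
    exact ⟨(le_max_right _ _).trans (h _ ⟨i, le_rfl, rfl⟩),
      fun j hj => (le_max_left _ _).trans (h _ ⟨j, hj, rfl⟩)⟩
  · rintro ⟨hc, h⟩ _ ⟨j, hj, rfl⟩
    exact max_le (h j hj) hc

lemma queue_nonneg {a s : Config} (hfq : FinQ a s) (i : ℤ) : 0 ≤ queue a s i :=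
  ((queue_le_iff hfq i _).1 le_rfl).1

lemma queue_eq_max {a s : Config} (hfq : FinQ a s) (i : ℤ) :
    queue a s i = max (queue a s (i - 1) + a i - s i) 0 := by
  refine eq_of_forall_ge_iff fun c => ?_
  have hsplit : ∀ j ≤ i - 1,
      cnt a j i - cnt s j i = cnt a j (i - 1) - cnt s j (i - 1) + (a i - s i) := by
    intro j hj
    obtain ⟨k, rfl⟩ : ∃ k, i = k + 1 := ⟨i - 1, by ring⟩
    simp only [add_sub_cancel_right] at hj ⊢
    rw [cnt_add_one a (by omega), cnt_add_one s (by omega)]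
    ring
  rw [queue_le_iff hfq, max_le_iff, add_sub_assoc, ← le_sub_iff_add_le, queue_le_iff hfq]
  constructor
  · rintro ⟨hc, h⟩
    refine ⟨⟨?_, fun j hj => ?_⟩, hc⟩
    · linarith [h i le_rfl, cnt_self a i, cnt_self s i]
    · linarith [h j (by omega), hsplit j hj]
  · rintro ⟨⟨hd, h⟩, hc⟩
    refine ⟨hc, fun j hj => ?_⟩
    rcases hj.lt_or_eq with hj | rfl
    · linarith [h j (by omega), hsplit j (by omega)]
    · linarith [cnt_self a j, cnt_self s j]

lemma dep_eq_queue_sub_queue_add {a s : Config} (ha : IsConfig a) (hs : IsConfig s)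
    (hfq : FinQ a s) (i : ℤ) :
    dep a s i = queue a s (i - 1) - queue a s i + a i := by
  have hQ := queue_nonneg hfq (i - 1)
  rw [queue_eq_max hfq i, dep]
  rcases ha i with ha | ha <;> rcases hs i with hs | hs <;> grind

/-- For configurations with finite queue lengths,
`D(a,s)[j,i] = Q_{j−1}(a,s) − Q_i(a,s) + a[j,i]` for all `j ≤ i`. -/
theorem stmt1 (a s : Config) (ha : IsConfig a) (hs : IsConfig s) (hfq : FinQ a s) :
    ∀ i j : ℤ, j ≤ i →
      cnt (dep a s) j i = queue a s (j - 1) - queue a s i + cnt a j i :=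
  fun _ _ hji => cnt_telescope (queue a s) (dep_eq_queue_sub_queue_add ha hs hfq) (by omega)
end

section
/- Fix i ∈ ℤ and n ≥ 2, and let x₁,…,xₙ be configurations such that every pair appearing as (arrivals, services) in the recursive definition of Dⁿ(x₁,…,xₙ) has finite queue lengths. Then Dⁿ_{i,0}(x₁,…,xₙ) ⪯ Dⁿ(x₁,…,xₙ). -/
open scoped BigOperators

/-!
Truncating both arrivals and services at time `i` leaves a queue that is empty before `i`, so
its length at time `k` is a supremum over the windows `[j, k]` with `j ≥ i` only, each carrying
no more arrivals than in the original system. Hence the truncated queue is never longer than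
the original one, and the truncated server can only depart a customer when the original one
does. The departures again vanish before `i` and are dominated by the original departures, so
the comparison propagates through the tandem station by station.
-/

lemma IsConfig.nonneg {x : Config} (hx : IsConfig x) (m : ℤ) : 0 ≤ x m := by
  rcases hx m with h | h <;> omega

lemma IsConfig.eq_one_of_one_le {x : Config} (hx : IsConfig x) {m : ℤ} (h : 1 ≤ x m) :
    x m = 1 := by
  rcases hx m with h' | h' <;> omega

lemma cnt_mono {a b : Config} (h : a ≤ b) (j k : ℤ) : cnt a j k ≤ cnt b j k :=
  Finset.sum_le_sum fun m _ => h m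

lemma cnt_of_lt (a : Config) {j k : ℤ} (h : k < j) : cnt a j k = 0 := by
  simp [cnt, Finset.Icc_eq_empty_of_lt h]

lemma cnt_max_of_eq_zero_below {a : Config} {i : ℤ} (h0 : ∀ m < i, a m = 0) (j k : ℤ) :
    cnt a (max j i) k = cnt a j k := by
  refine Finset.sum_subset (Finset.Icc_subset_Icc_left (le_max_left j i)) fun m hm hm' => ?_
  simp only [Finset.mem_Icc, max_le_iff, not_and, not_le] at hm hm'
  exact h0 m (by grind)

lemma trunc_of_lt (x : Config) {i m : ℤ} (h : m < i) : trunc x i m = 0 := by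
  simp [trunc, not_le.2 h]

lemma trunc_le {x : Config} (hx : ∀ m, 0 ≤ x m) (i : ℤ) : trunc x i ≤ x := fun m => by
  unfold trunc
  split_ifs
  exacts [le_rfl, hx m]

lemma cnt_trunc (x : Config) (i j k : ℤ) : cnt (trunc x i) j k = cnt x (max j i) k := by
  rw [← cnt_max_of_eq_zero_below (fun m hm => trunc_of_lt x hm) j k]
  refine Finset.sum_congr rfl fun m hm => ?_
  simp only [Finset.mem_Icc, max_le_iff] at hm
  simp [trunc, hm.1.2]

lemma le_queue {a s : Config} (hfq : FinQ a s) {j k : ℤ} (hj : j ≤ k) :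
    max (cnt a j k - cnt s j k) 0 ≤ queue a s k := by
  obtain ⟨b, hb⟩ := hfq k
  refine le_csSup ⟨max b 0, ?_⟩ ⟨j, hj, rfl⟩
  rintro q ⟨j', hj', rfl⟩
  exact max_le_max (hb ⟨j', hj', rfl⟩) le_rfl

lemma queue_le {a s : Config} {k B : ℤ}
    (h : ∀ j ≤ k, max (cnt a j k - cnt s j k) 0 ≤ B) : queue a s k ≤ B :=
  csSup_le ⟨_, k, le_rfl, rfl⟩ fun _ ⟨j, hj, hq⟩ => hq ▸ h j hj

lemma queue_trunc_le {a a' s : Config} {i : ℤ} (hfq : FinQ a s) (hle : a' ≤ a)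
    (h0 : ∀ m < i, a' m = 0) (k : ℤ) : queue a' (trunc s i) k ≤ queue a s k := by
  refine queue_le fun j _ => ?_
  rw [← cnt_max_of_eq_zero_below h0, cnt_trunc]
  rcases le_or_gt (max j i) k with hjk | hkj
  · exact (max_le_max (sub_le_sub_right (cnt_mono hle _ _) _) le_rfl).trans (le_queue hfq hjk)
  · simpa [cnt_of_lt _ hkj] using (le_max_right _ _).trans (le_queue hfq (le_refl k))

lemma dep_isConfig (a s : Config) : IsConfig (dep a s) := fun k => by
  unfold dep
  split_ifs <;> simp

lemma dep_trunc_of_lt (a s : Config) {i k : ℤ} (hk : k < i) : dep a (trunc s i) k = 0 := by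
  simp [dep, trunc_of_lt s hk]

lemma dep_trunc_le {a a' s : Config} {i : ℤ} (ha : IsConfig a) (hfq : FinQ a s)
    (hle : a' ≤ a) (h0 : ∀ m < i, a' m = 0) : dep a' (trunc s i) ≤ dep a s := fun k => by
  unfold dep
  split_ifs with h' h
  · exact le_rfl
  · obtain ⟨hs, hq⟩ := h'
    have hik : i ≤ k := not_lt.1 fun hki => by simp [trunc_of_lt s hki] at hs
    refine absurd ⟨by simpa [trunc, hik] using hs, ?_⟩ h
    rcases hq with hq | hq
    · exact Or.inl (hq.trans_le (queue_trunc_le hfq hle h0 (k - 1)))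
    · exact Or.inr (ha.eq_one_of_one_le (hq ▸ hle k))
  · exact zero_le_one
  · exact le_rfl

lemma Dtandem_trunc_le (i : ℤ) :
    ∀ (ss : List Config) {a a' : Config}, IsConfig a → a' ≤ a → (∀ m < i, a' m = 0) →
      TandemFinQ (a :: ss) → Dtandem a' (ss.map (trunc · i)) ≤ Dtandem a ss
  | [], _, _, _, hle, _, _ => hle
  | s :: ss, a, _, ha, hle, h0, hfq => by
    rw [TandemFinQ] at hfq
    exact Dtandem_trunc_le i ss (dep_isConfig a s) (dep_trunc_le ha hfq.1 hle h0)
      (fun _ hk => dep_trunc_of_lt _ s hk) hfq.2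

lemma DtandemList_map_trunc_le (i : ℤ) {l : List Config} (hl : ∀ x ∈ l, IsConfig x)
    (hfq : TandemFinQ l) : DtandemList (l.map (trunc · i)) ≤ DtandemList l := by
  cases l with
  | nil => exact le_rfl
  | cons x ss =>
    have hx := hl x List.mem_cons_self
    exact Dtandem_trunc_le i ss hx (trunc_le hx.nonneg i)
      (fun _ hm => trunc_of_lt x hm) hfq

theorem stmt6_general (i : ℤ) (n : ℕ) (x : Fin n → Config)
    (hx : ∀ k, IsConfig (x k))
    (hfq : TandemFinQ (List.ofFn x)) :
    ∀ m : ℤ, DtandemN (fun k => trunc (x k) i) m ≤ DtandemN x m := by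
  have hmap : List.ofFn (fun k => trunc (x k) i) = (List.ofFn x).map (trunc · i) := by
    rw [List.map_ofFn]; rfl
  unfold DtandemN
  rw [hmap]
  exact DtandemList_map_trunc_le i (by simpa [List.mem_ofFn] using hx) hfq

/-- `Dⁿ_{i,0}(x₁,…,xₙ) ⪯ Dⁿ(x₁,…,xₙ)` whenever all queue lengths appearing
in the recursive definition of `Dⁿ(x₁,…,xₙ)` are finite. -/
theorem stmt6 (i : ℤ) (n : ℕ) (hn : 2 ≤ n) (x : Fin n → Config)
    (hx : ∀ k, IsConfig (x k))
    (hfq : TandemFinQ (List.ofFn x)) :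
    ∀ m : ℤ, DtandemN (fun k => trunc (x k) i) m ≤ DtandemN x m :=
  stmt6_general i n x hx hfq
end

section
/- Let n ≥ 1 and let x₁,…,xₙ be configurations such that all queue-length suprema arising in the definitions of the multiclass maps F_m and of all tandem departure maps below are finite. Let vₙ = Vₙ(x₁,…,xₙ), and define d^{n,m} = D^{n−m+1}(x_m, x_{m+1},…,xₙ) for 1 ≤ m ≤ n−1 and d^{n,n} = xₙ. Then for all integers i ≤ j and every m ∈ {1,…,n}, Cls^{[i,j]}_m(vₙ) = d^{n,m}[i,j]. -/
open scoped BigOperators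

/-- A multiclass configuration: value `k ∈ {1,2,…}` is a customer of class `k`,
`⊤ = ∞` is an empty slot. -/
abbrev MConfig := ℤ → ℕ∞

/-- `Cls^{[i,j]}_k(v) = #{l ∈ [i,j] : v(l) ≤ k}` (also `a^{≤k}[i,j]` for arrivals). -/
noncomputable def mcnt (v : MConfig) (k : ℕ) (i j : ℤ) : ℤ :=
  (((Finset.Icc i j).filter fun l => v l ≤ (k : ℕ∞)).card : ℤ)

/-- `Q^{≤k}_i(a,s) = sup_{j ≤ i} max(a^{≤k}[j,i] − s[j,i], 0)`. -/
noncomputable def mqueue (a : MConfig) (s : Config) (k : ℕ) (i : ℤ) : ℤ :=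
  sSup {q : ℤ | ∃ j ≤ i, q = max (mcnt a k j i - cnt s j i) 0}

/-- The multiclass departure map `F_m(a,s)`: at a service time, the highest-priority
(lowest-label) available class in `{1,…,m}` departs; an unused service becomes a
departure of class `m+1`; no service means an empty slot. -/
noncomputable def Fm (m : ℕ) (a : MConfig) (s : Config) : MConfig := fun i =>
  if s i = 1 then
    ((sInf ({k : ℕ | 1 ≤ k ∧ k ≤ m ∧
        (0 < mqueue a s k (i - 1) ∨ a i ≤ (k : ℕ∞))} ∪ {m + 1}) : ℕ) : ℕ∞)
  else ⊤

/-- A configuration viewed as a multiclass configuration of order 1. -/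
def toM (x : Config) : MConfig := fun i => if x i = 1 then 1 else ⊤

/-- `Vn m v [s₁,…,s_k]` iterates `v ↦ F_m(v,s)`: with `v = v_m` of order `m` it produces
`v_{m+k}`.  In particular `Vn 1 (toM x₁) [x₂,…,xₙ] = Vₙ(x₁,…,xₙ)`. -/
noncomputable def Vn : ℕ → MConfig → List Config → MConfig
  | _, v, [] => v
  | m, v, s :: rest => Vn (m + 1) (Fm m v s) rest

/-- All queue-length suprema arising in the iteration of the multiclass maps `F_m`
are finite. -/
def VFinQ : ℕ → MConfig → List Config → Prop
  | _, _, [] => True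
  | m, v, s :: rest =>
      (∀ k : ℕ, ∀ i : ℤ, BddAbove {q : ℤ | ∃ j ≤ i, q = mcnt v k j i - cnt s j i})
        ∧ VFinQ (m + 1) (Fm m v s) rest

/-!
Under priority service, customers of classes `≤ k` never see customers of higher classes.
Hence for `k ≤ m` the customers of class `≤ k` in `F_m(a, s)` are exactly the departures
`D(a^{≤k}, s)` of the single-class queue fed by the customers of class `≤ k` in `a`, while the
customers of class `≤ m + 1` fill every service slot, i.e. form `s`. Iterating along
`v₁, …, vₙ`, the customers of class `≤ m` in `vₙ` are obtained from `x_m` by passing through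
the servers `x_{m+1}, …, xₙ` in tandem.
-/

noncomputable def classLE (v : MConfig) (k : ℕ) : Config :=
  fun i => if v i ≤ (k : ℕ∞) then 1 else 0

lemma mcnt_eq_cnt_classLE (v : MConfig) (k : ℕ) (i j : ℤ) :
    mcnt v k i j = cnt (classLE v k) i j := by
  simp only [mcnt, cnt, classLE, Finset.card_filter]
  push_cast
  exact Finset.sum_congr rfl fun l _ => by split_ifs <;> rfl

lemma mqueue_eq_queue_classLE (v : MConfig) (s : Config) (k : ℕ) (i : ℤ) :
    mqueue v s k i = queue (classLE v k) s i := by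
  simp only [mqueue, queue, mcnt_eq_cnt_classLE]

lemma mcnt_mono (v : MConfig) {k k' : ℕ} (h : k' ≤ k) (i j : ℤ) :
    mcnt v k' i j ≤ mcnt v k i j := by
  unfold mcnt
  gcongr

lemma mqueue_pos_iff {v : MConfig} {s : Config} {k : ℕ} {i : ℤ}
    (hbdd : BddAbove {q : ℤ | ∃ j ≤ i, q = mcnt v k j i - cnt s j i}) :
    0 < mqueue v s k i ↔ ∃ j ≤ i, cnt s j i < mcnt v k j i := by
  obtain ⟨B, hB⟩ := hbdd
  have hbdd' : BddAbove {q : ℤ | ∃ j ≤ i, q = max (mcnt v k j i - cnt s j i) 0} := by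
    refine ⟨max B 0, ?_⟩
    rintro _ ⟨j, hj, rfl⟩
    exact max_le_max (hB ⟨j, hj, rfl⟩) le_rfl
  rw [mqueue, lt_csSup_iff hbdd' ⟨_, i, le_rfl, rfl⟩]
  constructor
  · rintro ⟨_, ⟨j, hj, rfl⟩, hpos⟩
    exact ⟨j, hj, by simpa using hpos⟩
  · rintro ⟨j, hj, hlt⟩
    exact ⟨_, ⟨j, hj, rfl⟩, by simpa using hlt⟩

/-- The condition on the right is monotone in `k` (by `mqueue_pos_iff` and `mcnt_mono`), so
it holds at `k` exactly when the least class satisfying it, the one `F_m` serves, is `≤ k`. -/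
lemma Fm_le_iff {m k : ℕ} {v : MConfig} {s : Config} {i : ℤ} (hs : s i = 1)
    (hbdd : ∀ k : ℕ, BddAbove {q : ℤ | ∃ j ≤ i - 1, q = mcnt v k j (i - 1) - cnt s j (i - 1)})
    (hk : 1 ≤ k) (hkm : k ≤ m) :
    Fm m v s i ≤ k ↔ 0 < mqueue v s k (i - 1) ∨ v i ≤ k := by
  simp only [Fm, hs, if_true, Nat.cast_le]
  constructor
  · intro hle
    rcases Nat.sInf_mem (⟨m + 1, Or.inr rfl⟩ : Set.Nonempty
        ({k' : ℕ | 1 ≤ k' ∧ k' ≤ m ∧ (0 < mqueue v s k' (i - 1) ∨ v i ≤ (k' : ℕ∞))}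
          ∪ {m + 1})) with ⟨-, -, hq | hv⟩ | htop
    · left
      obtain ⟨j, hj, hlt⟩ := (mqueue_pos_iff (hbdd _)).1 hq
      exact (mqueue_pos_iff (hbdd k)).2 ⟨j, hj, hlt.trans_le (mcnt_mono v hle _ _)⟩
    · exact Or.inr (hv.trans (by exact_mod_cast hle))
    · rw [Set.mem_singleton_iff.1 htop] at hle
      omega
  · intro hcond
    exact Nat.sInf_le (Or.inl ⟨hk, hkm, hcond⟩)

lemma classLE_Fm {m k : ℕ} (hk : 1 ≤ k) (hkm : k ≤ m) {v : MConfig} {s : Config}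
    (hbdd : ∀ k : ℕ, ∀ i : ℤ, BddAbove {q : ℤ | ∃ j ≤ i, q = mcnt v k j i - cnt s j i}) :
    classLE (Fm m v s) k = dep (classLE v k) s := by
  funext i
  by_cases hs : s i = 1
  · simp only [classLE, dep, hs, true_and, ← mqueue_eq_queue_classLE,
      Fm_le_iff hs (hbdd · _) hk hkm]
    by_cases hv : v i ≤ k <;> simp [hv]
  · simp [classLE, dep, Fm, hs]

lemma classLE_Fm_succ (m : ℕ) (v : MConfig) {s : Config} (hs : IsConfig s) :
    classLE (Fm m v s) (m + 1) = s := by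
  funext i
  rcases hs i with h | h
  · simp [classLE, Fm, h]
  · simp only [classLE, Fm, h, if_true, Nat.cast_le]
    rw [if_pos (Nat.sInf_le (Or.inr rfl))]

lemma classLE_toM {x : Config} (hx : IsConfig x) : classLE (toM x) 1 = x := by
  funext i
  rcases hx i with h | h <;> simp [classLE, toM, h]

lemma classLE_Vn_of_le {k : ℕ} (hk : 1 ≤ k) :
    ∀ {L : List Config} {m : ℕ} {v : MConfig}, VFinQ m v L → k ≤ m →
      classLE (Vn m v L) k = Dtandem (classLE v k) L
  | [], _, _, _, _ => rfl
  | s :: _, m, _, ⟨hbdd, hfin⟩, hkm => by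
    rw [Vn, Dtandem, classLE_Vn_of_le hk hfin (hkm.trans m.le_succ), classLE_Fm hk hkm hbdd]

lemma classLE_Vn_add_succ :
    ∀ {L : List Config} {m t : ℕ} {v : MConfig}, (∀ s ∈ L, IsConfig s) → VFinQ m v L →
      t < L.length → classLE (Vn m v L) (m + t + 1) = DtandemList (L.drop t)
  | [], _, _, _, _, _, ht => absurd ht (Nat.not_lt_zero _)
  | s :: _, m, 0, _, hL, ⟨_, hfin⟩, _ => by
    rw [Vn, classLE_Vn_of_le m.succ_pos hfin le_rfl,
      classLE_Fm_succ m _ (hL s List.mem_cons_self)]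
    rfl
  | _ :: _, m, t + 1, _, hL, ⟨_, hfin⟩, ht => by
    rw [Vn, show m + (t + 1) + 1 = m + 1 + t + 1 by omega,
      classLE_Vn_add_succ (fun s hs => hL s (List.mem_cons_of_mem _ hs)) hfin
        (Nat.lt_of_succ_lt_succ ht)]
    rfl

theorem stmt13_general (n : ℕ) (hn : 1 ≤ n) (x : Fin n → Config) (hx : ∀ k, IsConfig (x k))
    (hV : VFinQ 1 (toM (x ⟨0, hn⟩)) ((List.ofFn x).drop 1)) :
    ∀ i j : ℤ, i ≤ j → ∀ m : ℕ, 1 ≤ m → m ≤ n →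
      mcnt (Vn 1 (toM (x ⟨0, hn⟩)) ((List.ofFn x).drop 1)) m i j
        = cnt (DtandemList ((List.ofFn x).drop (m - 1))) i j := by
  intro i j _ m hm hmn
  rw [mcnt_eq_cnt_classLE]
  congr 1
  obtain _ | _ | k := m
  · omega
  · have hcons : List.ofFn x = x ⟨0, hn⟩ :: (List.ofFn x).drop 1 := by
      obtain ⟨n, rfl⟩ : ∃ n', n = n' + 1 := ⟨n - 1, by omega⟩
      simp [List.ofFn_succ]
    rw [classLE_Vn_of_le le_rfl hV le_rfl, classLE_toM (hx _), Nat.sub_self, List.drop_zero,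
      hcons]
    rfl
  · have hL : ∀ s ∈ (List.ofFn x).drop 1, IsConfig s := by
      intro s hs
      obtain ⟨k, rfl⟩ := List.mem_ofFn.1 (List.mem_of_mem_drop hs)
      exact hx k
    rw [show k + 1 + 1 = 1 + k + 1 by omega, classLE_Vn_add_succ hL hV (by simp; omega),
      List.drop_drop]
    congr 2

/-- With `vₙ = Vₙ(x₁,…,xₙ)` and `d^{n,m} = D^{n−m+1}(x_m,…,xₙ)`
(`d^{n,n} = xₙ`), for all `i ≤ j` and `1 ≤ m ≤ n`, `Cls^{[i,j]}_m(vₙ) = d^{n,m}[i,j]`. -/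
theorem stmt13 (n : ℕ) (hn : 1 ≤ n) (x : Fin n → Config) (hx : ∀ k, IsConfig (x k))
    (hV : VFinQ 1 (toM (x ⟨0, hn⟩)) ((List.ofFn x).drop 1))
    (hD : ∀ m : ℕ, TandemFinQ ((List.ofFn x).drop m)) :
    ∀ i j : ℤ, i ≤ j → ∀ m : ℕ, 1 ≤ m → m ≤ n →
      mcnt (Vn 1 (toM (x ⟨0, hn⟩)) ((List.ofFn x).drop 1)) m i j
        = cnt (DtandemList ((List.ofFn x).drop (m - 1))) i j :=
  stmt13_general n hn x hx hV
end

section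
/- Let p ∈ (0,1) and let (x(i))_{i∈ℤ} be i.i.d. Bernoulli(p) random variables. Then for all integers i ≤ j and every real t > 0, P( max_{l ∈ [i,j]} | x[i,l] − (l−i+1)p | > t ) ≤ 6 exp( −2t² / (9(j−i+1)) ). -/
open scoped BigOperators

open MeasureTheory ProbabilityTheory

/-! Centred Bernoulli variables are bounded with mean zero, hence sub-Gaussian with variance
proxy `1/4` by Hoeffding's lemma. For the maximum of the partial sums `S_l` we use the
first-passage decomposition behind Doob's inequality: on the event that `S` first reaches `ε`
at time `l`, the later increments are independent of the past and `e^{t(S_j - S_l)}` has mean at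
least `1`, so `e^{tε} P(max_l S_l ≥ ε) ≤ E e^{t S_j}`. Optimising `t` gives
`P(max_l |S_l| ≥ ε) ≤ 2 exp(-2ε²/n)`, which is stronger than the bound `6 exp(-2ε²/(9n))`. -/

open Finset Real
open scoped NNReal

section Independence

variable {ι Ω β γ : Type*} [MeasurableSpace Ω] [MeasurableSpace β] [Nonempty β]
  [MeasurableSpace γ] {P : Measure Ω} {Z : ι → Ω → β}

lemma ProbabilityTheory.iIndepFun.indepFun_comp_of_dependsOn (hind : iIndepFun Z P)
    (hm : ∀ r, Measurable (Z r)) {S T : Finset ι} (hST : Disjoint S T) {F G : (ι → β) → γ}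
    (hF : Measurable F) (hG : Measurable G) (hFS : DependsOn F S) (hGT : DependsOn G T) :
    IndepFun (fun ω ↦ F (Z · ω)) (fun ω ↦ G (Z · ω)) P := by
  classical
  let extend (U : Finset ι) (u : U → β) (r : ι) : β :=
    if h : r ∈ U then u ⟨r, h⟩ else Classical.arbitrary β
  have hextend (U : Finset ι) : Measurable (extend U) := measurable_pi_lambda _ fun r ↦ by
    by_cases h : r ∈ U
    · simpa [extend, h] using measurable_pi_apply (⟨r, h⟩ : U)
    · simp [extend, h]
  have hcomp {H : (ι → β) → γ} {U : Finset ι} (hHU : DependsOn H U) :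
      (fun ω ↦ H (Z · ω)) = (H ∘ extend U) ∘ fun ω (r : U) ↦ Z r ω :=
    funext fun ω ↦ hHU fun r hr ↦ by simp [extend, Finset.mem_coe.1 hr]
  rw [hcomp hFS, hcomp hGT]
  exact (hind.indepFun_finset S T hST hm).comp (hF.comp (hextend S)) (hG.comp (hextend T))

end Independence

lemma one_le_integral_exp {Ω : Type*} [MeasurableSpace Ω] {P : Measure Ω}
    [IsProbabilityMeasure P] {Y : Ω → ℝ} (hY : Integrable Y P) (hY0 : P[Y] = 0)
    (hexp : Integrable (fun ω ↦ exp (Y ω)) P) : 1 ≤ ∫ ω, exp (Y ω) ∂P :=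
  calc 1 = ∫ ω, (Y ω + 1) ∂P := by
        rw [integral_add hY (integrable_const 1), hY0]; simp
    _ ≤ ∫ ω, exp (Y ω) ∂P :=
        integral_mono (hY.add (integrable_const 1)) hexp fun ω ↦ add_one_le_exp (Y ω)

section FirstPassage

variable {ι : Type*} [LinearOrder ι] [LocallyFiniteOrder ι]

def firstPassage (i l : ι) (ε : ℝ) : Set (ι → ℝ) :=
  {z | ε ≤ ∑ r ∈ Icc i l, z r ∧ ∀ k ∈ Ico i l, ∑ r ∈ Icc i k, z r < ε}

lemma measurableSet_firstPassage (i l : ι) (ε : ℝ) : MeasurableSet (firstPassage i l ε) := by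
  have hsum (k : ι) : Measurable fun z : ι → ℝ ↦ ∑ r ∈ Icc i k, z r :=
    measurable_sum _ fun r _ ↦ measurable_pi_apply r
  have h : firstPassage i l ε = {z | ε ≤ ∑ r ∈ Icc i l, z r} ∩
      ⋂ k ∈ Ico i l, {z | ∑ r ∈ Icc i k, z r < ε} := by
    ext; simp [firstPassage]
  rw [h]
  exact (measurableSet_le measurable_const (hsum l)).inter <|
    .biInter (Set.to_countable _) fun k _ ↦ measurableSet_lt (hsum k) measurable_const

lemma pairwiseDisjoint_firstPassage (i j : ι) (ε : ℝ) :
    (Icc i j : Set ι).PairwiseDisjoint (firstPassage i · ε) := by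
  have key {l l' : ι} (hil : i ≤ l) (hll' : l < l') :
      Disjoint (firstPassage i l ε) (firstPassage i l' ε) :=
    Set.disjoint_left.2 fun _ hl hl' ↦ (hl.1.trans_lt (hl'.2 l (mem_Ico.2 ⟨hil, hll'⟩))).false
  intro l hl l' hl' hne
  rcases hne.lt_or_gt with h | h
  · exact key (mem_Icc.1 hl).1 h
  · exact (key (mem_Icc.1 hl').1 h).symm

lemma setOf_exists_le_partialSum_eq_biUnion_firstPassage (i j : ι) (ε : ℝ) :
    {z : ι → ℝ | ∃ l ∈ Icc i j, ε ≤ ∑ r ∈ Icc i l, z r} = ⋃ l ∈ Icc i j, firstPassage i l ε := by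
  ext z
  simp only [Set.mem_ofPred_eq, Set.mem_iUnion, exists_prop]
  constructor
  · rintro ⟨l, hl, hεl⟩
    obtain ⟨m, hm, hmin⟩ :=
      ((Icc i j).filter (ε ≤ ∑ r ∈ Icc i ·, z r)).exists_min_image id ⟨l, mem_filter.2 ⟨hl, hεl⟩⟩
    obtain ⟨hm, hεm⟩ := mem_filter.1 hm
    refine ⟨m, hm, hεm, fun k hk ↦ not_le.1 fun hεk ↦ ?_⟩
    obtain ⟨hik, hkm⟩ := mem_Ico.1 hk
    have hkj : k ≤ j := hkm.le.trans (mem_Icc.1 hm).2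
    exact hkm.not_ge (hmin k (mem_filter.2 ⟨mem_Icc.2 ⟨hik, hkj⟩, hεk⟩))
  · rintro ⟨l, hl, hεl, -⟩
    exact ⟨l, hl, hεl⟩

lemma dependsOn_indicator_firstPassage (i l : ι) (ε : ℝ) (f : ℝ → ℝ) :
    DependsOn ((firstPassage i l ε).indicator fun z ↦ f (∑ r ∈ Icc i l, z r)) (Icc i l) := by
  intro z z' h
  have hsum {k : ι} (hk : k ≤ l) : ∑ r ∈ Icc i k, z r = ∑ r ∈ Icc i k, z' r :=
    sum_congr rfl fun r hr ↦ h r (mem_Icc.2 ⟨(mem_Icc.1 hr).1, (mem_Icc.1 hr).2.trans hk⟩)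
  have hmem : z ∈ firstPassage i l ε ↔ z' ∈ firstPassage i l ε := by
    simp only [firstPassage, Set.mem_ofPred_eq, hsum le_rfl]
    exact and_congr_right' <| forall₂_congr fun k hk ↦ by rw [hsum (mem_Ico.1 hk).2.le]
  by_cases hz : z ∈ firstPassage i l ε
  · simp [Set.indicator_of_mem hz, Set.indicator_of_mem (hmem.1 hz), hsum le_rfl]
  · simp [Set.indicator_of_notMem hz, Set.indicator_of_notMem (mt hmem.2 hz)]

end FirstPassage

section Maximal

variable {ι Ω : Type*} [MeasurableSpace Ω] {P : Measure Ω} [IsProbabilityMeasure P]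
  {Z : ι → Ω → ℝ}

lemma integral_le_integral_mul_exp_sum (hind : iIndepFun Z P) (hm : ∀ r, Measurable (Z r))
    {S T : Finset ι} (hST : Disjoint S T) {F : (ι → ℝ) → ℝ} (hF : Measurable F) (hF0 : 0 ≤ F)
    (hFS : DependsOn F S) (hint : ∀ r ∈ T, Integrable (Z r) P) (hmean : ∀ r ∈ T, P[Z r] = 0)
    {t : ℝ} (hexp : Integrable (fun ω ↦ exp (t * ∑ r ∈ T, Z r ω)) P) :
    ∫ ω, F (Z · ω) ∂P ≤ ∫ ω, F (Z · ω) * exp (t * ∑ r ∈ T, Z r ω) ∂P := by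
  have hG : Measurable fun z : ι → ℝ ↦ exp (t * ∑ r ∈ T, z r) :=
    (measurable_const.mul (measurable_sum _ fun r _ ↦ measurable_pi_apply r)).exp
  have hGT : DependsOn (fun z : ι → ℝ ↦ exp (t * ∑ r ∈ T, z r)) T :=
    fun _ _ h ↦ congrArg (fun s ↦ exp (t * s)) (sum_congr rfl fun r hr ↦ h r hr)
  have hindep := hind.indepFun_comp_of_dependsOn hm hST hF hG hFS hGT
  have hT : 1 ≤ ∫ ω, exp (t * ∑ r ∈ T, Z r ω) ∂P := by
    refine one_le_integral_exp ((integrable_finsetSum T hint).const_mul t) ?_ hexp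
    rw [integral_const_mul, integral_finsetSum T hint, sum_eq_zero hmean, mul_zero]
  calc ∫ ω, F (Z · ω) ∂P ≤ (∫ ω, F (Z · ω) ∂P) * ∫ ω, exp (t * ∑ r ∈ T, Z r ω) ∂P :=
        le_mul_of_one_le_right (integral_nonneg fun ω ↦ hF0 _) hT
    _ = ∫ ω, F (Z · ω) * exp (t * ∑ r ∈ T, Z r ω) ∂P :=
        (hindep.integral_mul_eq_mul_integral
          (hF.comp (measurable_pi_lambda _ hm)).aestronglyMeasurable
          (hG.comp (measurable_pi_lambda _ hm)).aestronglyMeasurable).symm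

variable [LinearOrder ι] [LocallyFiniteOrder ι]

lemma sum_Icc_eq_sum_Icc_add_sum_Ioc {i l j : ι} (hil : i ≤ l) (hlj : l ≤ j) (z : ι → ℝ) :
    ∑ r ∈ Icc i j, z r = ∑ r ∈ Icc i l, z r + ∑ r ∈ Ioc l j, z r := by
  rw [← sum_union (disjoint_left.2 fun r hr hr' ↦ (mem_Ioc.1 hr').1.not_ge (mem_Icc.1 hr).2)]
  congr 1
  exact coe_injective (by push_cast; exact (Set.Icc_union_Ioc_eq_Icc hil hlj).symm)

lemma exp_mul_measureReal_firstPassage_le (hind : iIndepFun Z P) (hm : ∀ r, Measurable (Z r))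
    (hint : ∀ r, Integrable (Z r) P) (hmean : ∀ r, P[Z r] = 0) {t : ℝ} (ht : 0 ≤ t)
    (hexp : ∀ r, Integrable (fun ω ↦ exp (t * Z r ω)) P) {i l j : ι} (hl : l ∈ Icc i j)
    (ε : ℝ) :
    exp (t * ε) * P.real {ω | (Z · ω) ∈ firstPassage i l ε} ≤
      ∫ ω in {ω | (Z · ω) ∈ firstPassage i l ε}, exp (t * ∑ r ∈ Icc i j, Z r ω) ∂P := by
  obtain ⟨hil, hlj⟩ := mem_Icc.1 hl
  set A := {ω | (Z · ω) ∈ firstPassage i l ε}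
  have hA : MeasurableSet A :=
    measurable_pi_lambda _ hm (measurableSet_firstPassage i l ε)
  have hexpSum (s : Finset ι) : Integrable (fun ω ↦ exp (t * ∑ r ∈ s, Z r ω)) P := by
    simpa only [Finset.sum_apply] using hind.integrable_exp_mul_sum hm (s := s) fun r _ ↦ hexp r
  let F := (firstPassage i l ε).indicator fun z ↦ exp (t * ∑ r ∈ Icc i l, z r)
  have hF : Measurable F := (measurable_const.mul
    (measurable_sum _ fun r _ ↦ measurable_pi_apply r)).exp.indicator
      (measurableSet_firstPassage i l ε)
  have hdisj : Disjoint (Icc i l) (Ioc l j) :=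
    disjoint_left.2 fun r hr hr' ↦ (mem_Ioc.1 hr').1.not_ge (mem_Icc.1 hr).2
  calc exp (t * ε) * P.real A = ∫ ω in A, exp (t * ε) ∂P := by
        rw [setIntegral_const, smul_eq_mul, mul_comm]
    _ ≤ ∫ ω in A, exp (t * ∑ r ∈ Icc i l, Z r ω) ∂P :=
        setIntegral_mono_on (integrable_const _) (hexpSum _).integrableOn hA
          fun ω hω ↦ exp_le_exp.2 (mul_le_mul_of_nonneg_left hω.1 ht)
    _ = ∫ ω, F (Z · ω) ∂P := by
        rw [← integral_indicator hA]
        rfl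
    _ ≤ ∫ ω, F (Z · ω) * exp (t * ∑ r ∈ Ioc l j, Z r ω) ∂P :=
        integral_le_integral_mul_exp_sum hind hm hdisj hF
          (Set.indicator_nonneg fun _ _ ↦ (exp_pos _).le)
          (dependsOn_indicator_firstPassage i l ε fun s ↦ exp (t * s)) (fun r _ ↦ hint r)
          (fun r _ ↦ hmean r) (hexpSum _)
    _ = ∫ ω in A, exp (t * ∑ r ∈ Icc i j, Z r ω) ∂P := by
        rw [← integral_indicator hA]
        congr 1 with ω
        by_cases hω : ω ∈ A
        · have hω' : (Z · ω) ∈ firstPassage i l ε := hω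
          simp only [F, Set.indicator_of_mem hω, Set.indicator_of_mem hω', ← exp_add, ← mul_add,
            sum_Icc_eq_sum_Icc_add_sum_Ioc hil hlj]
        · have hω' : (Z · ω) ∉ firstPassage i l ε := hω
          simp only [F, Set.indicator_of_notMem hω, Set.indicator_of_notMem hω', zero_mul]

lemma exp_mul_measureReal_exists_le_partialSum_le (hind : iIndepFun Z P)
    (hm : ∀ r, Measurable (Z r)) (hint : ∀ r, Integrable (Z r) P) (hmean : ∀ r, P[Z r] = 0)
    {t : ℝ} (ht : 0 ≤ t) (hexp : ∀ r, Integrable (fun ω ↦ exp (t * Z r ω)) P) (i j : ι)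
    (ε : ℝ) :
    exp (t * ε) * P.real {ω | ∃ l ∈ Icc i j, ε ≤ ∑ r ∈ Icc i l, Z r ω} ≤
      mgf (fun ω ↦ ∑ r ∈ Icc i j, Z r ω) P t := by
  let A (l : ι) : Set Ω := (fun ω r ↦ Z r ω) ⁻¹' firstPassage i l ε
  have hA (l : ι) : MeasurableSet (A l) :=
    measurable_pi_lambda _ hm (measurableSet_firstPassage i l ε)
  have hdisj : (Icc i j : Set ι).PairwiseDisjoint A :=
    fun l hl l' hl' hne ↦ (pairwiseDisjoint_firstPassage i j ε hl hl' hne).preimage _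
  have hevent : {ω | ∃ l ∈ Icc i j, ε ≤ ∑ r ∈ Icc i l, Z r ω} = ⋃ l ∈ Icc i j, A l := by
    rw [← Set.preimage_iUnion₂, ← setOf_exists_le_partialSum_eq_biUnion_firstPassage]
    rfl
  have hexpSum : Integrable (fun ω ↦ exp (t * ∑ r ∈ Icc i j, Z r ω)) P := by
    simpa only [Finset.sum_apply] using hind.integrable_exp_mul_sum hm fun r _ ↦ hexp r
  calc exp (t * ε) * P.real {ω | ∃ l ∈ Icc i j, ε ≤ ∑ r ∈ Icc i l, Z r ω}
      = ∑ l ∈ Icc i j, exp (t * ε) * P.real (A l) := by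
        rw [hevent, measureReal_biUnion_finset hdisj fun l _ ↦ hA l, mul_sum]
    _ ≤ ∑ l ∈ Icc i j, ∫ ω in A l, exp (t * ∑ r ∈ Icc i j, Z r ω) ∂P :=
        sum_le_sum fun l hl ↦
          exp_mul_measureReal_firstPassage_le hind hm hint hmean ht hexp hl ε
    _ = ∫ ω in ⋃ l ∈ Icc i j, A l, exp (t * ∑ r ∈ Icc i j, Z r ω) ∂P :=
        (integral_biUnion_finset _ (fun l _ ↦ hA l) hdisj fun l _ ↦ hexpSum.integrableOn).symm
    _ ≤ mgf (fun ω ↦ ∑ r ∈ Icc i j, Z r ω) P t :=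
        setIntegral_le_integral hexpSum (ae_of_all _ fun ω ↦ (exp_pos _).le)

theorem measureReal_exists_le_partialSum_le (hind : iIndepFun Z P) (hm : ∀ r, Measurable (Z r))
    {c : ι → ℝ≥0} (hsub : ∀ r, HasSubgaussianMGF (Z r) (c r) P) (hmean : ∀ r, P[Z r] = 0)
    (i j : ι) {ε : ℝ} (hε : 0 ≤ ε) :
    P.real {ω | ∃ l ∈ Icc i j, ε ≤ ∑ r ∈ Icc i l, Z r ω} ≤
      exp (-ε ^ 2 / (2 * ∑ r ∈ Icc i j, c r)) := by
  set C : ℝ≥0 := ∑ r ∈ Icc i j, c r with hC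
  rcases eq_or_ne C 0 with hC0 | hC0
  · simp [hC0]
  have hCpos : (0 : ℝ) < C := by positivity
  have hsum := HasSubgaussianMGF.sum_of_iIndepFun hind (s := Icc i j) fun r _ ↦ hsub r
  have key := exp_mul_measureReal_exists_le_partialSum_le hind hm (fun r ↦ (hsub r).integrable)
    hmean (t := ε / C) (by positivity) (fun r ↦ (hsub r).integrable_exp_mul _) i j ε
  rw [← le_div_iff₀' (exp_pos _)] at key
  calc _ ≤ exp (C * (ε / C) ^ 2 / 2) / exp (ε / C * ε) :=
        key.trans (div_le_div_of_nonneg_right (hsum.mgf_le _) (exp_pos _).le)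
    _ = exp (-ε ^ 2 / (2 * C)) := by rw [← exp_sub]; congr 1; field_simp; ring

theorem measureReal_exists_le_abs_partialSum_le (hind : iIndepFun Z P)
    (hm : ∀ r, Measurable (Z r)) {c : ι → ℝ≥0} (hsub : ∀ r, HasSubgaussianMGF (Z r) (c r) P)
    (hmean : ∀ r, P[Z r] = 0) (i j : ι) {ε : ℝ} (hε : 0 ≤ ε) :
    P.real {ω | ∃ l ∈ Icc i j, ε ≤ |∑ r ∈ Icc i l, Z r ω|} ≤
      2 * exp (-ε ^ 2 / (2 * ∑ r ∈ Icc i j, c r)) := by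
  have hneg := measureReal_exists_le_partialSum_le (Z := fun r ↦ -Z r)
    (hind.comp (fun _ ↦ Neg.neg) fun _ ↦ measurable_neg) (fun r ↦ (hm r).neg)
    (fun r ↦ (hsub r).neg) (fun r ↦ by simp [integral_neg, hmean r]) i j hε
  have hpos := measureReal_exists_le_partialSum_le hind hm hsub hmean i j hε
  have hsubset : {ω | ∃ l ∈ Icc i j, ε ≤ |∑ r ∈ Icc i l, Z r ω|} ⊆
      {ω | ∃ l ∈ Icc i j, ε ≤ ∑ r ∈ Icc i l, Z r ω} ∪
        {ω | ∃ l ∈ Icc i j, ε ≤ ∑ r ∈ Icc i l, (-Z r) ω} := by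
    rintro ω ⟨l, hl, hεl⟩
    rcases le_abs'.1 hεl with h | h
    · exact Or.inr ⟨l, hl, by simpa [sum_neg_distrib] using le_neg_of_le_neg h⟩
    · exact Or.inl ⟨l, hl, h⟩
  calc _ ≤ _ := measureReal_mono hsubset
    _ ≤ _ := measureReal_union_le _ _
    _ ≤ _ := by linarith

end Maximal

section Bernoulli

variable {Ω : Type*} [MeasurableSpace Ω] {P : Measure Ω} {Y : Ω → ℤ} {p : ℝ}

lemma integral_intCast_of_zero_or_one (hY : Measurable Y) (h01 : ∀ ω, Y ω = 0 ∨ Y ω = 1)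
    (hp : 0 ≤ p) (hber : P {ω | Y ω = 1} = ENNReal.ofReal p) : ∫ ω, (Y ω : ℝ) ∂P = p := by
  have hind : (fun ω ↦ (Y ω : ℝ)) = (Y ⁻¹' {1}).indicator 1 := by
    ext ω
    rcases h01 ω with h | h <;> simp [h]
  have hber' : P (Y ⁻¹' {1}) = ENNReal.ofReal p := hber
  rw [hind, integral_indicator_one (hY (measurableSet_singleton 1)), measureReal_def, hber',
    ENNReal.toReal_ofReal hp]

lemma mem_Icc_intCast_of_zero_or_one (h01 : ∀ ω, Y ω = 0 ∨ Y ω = 1) :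
    ∀ᵐ ω ∂P, (Y ω : ℝ) ∈ Set.Icc 0 1 :=
  ae_of_all _ fun ω ↦ by rcases h01 ω with h | h <;> simp [h]

variable [IsProbabilityMeasure P]

lemma integral_intCast_sub_eq_zero (hY : Measurable Y) (h01 : ∀ ω, Y ω = 0 ∨ Y ω = 1)
    (hp : 0 ≤ p) (hber : P {ω | Y ω = 1} = ENNReal.ofReal p) :
    ∫ ω, ((Y ω : ℝ) - p) ∂P = 0 := by
  have hint : Integrable (fun ω ↦ (Y ω : ℝ)) P :=
    .of_mem_Icc 0 1 (measurable_of_countable _ |>.comp hY).aemeasurable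
      (mem_Icc_intCast_of_zero_or_one h01)
  simp [integral_sub hint (integrable_const p), integral_intCast_of_zero_or_one hY h01 hp hber]

lemma hasSubgaussianMGF_intCast_sub (hY : Measurable Y) (h01 : ∀ ω, Y ω = 0 ∨ Y ω = 1)
    (hp : 0 ≤ p) (hber : P {ω | Y ω = 1} = ENNReal.ofReal p) :
    HasSubgaussianMGF (fun ω ↦ (Y ω : ℝ) - p) 4⁻¹ P := by
  have h := hasSubgaussianMGF_of_mem_Icc (measurable_of_countable _ |>.comp hY).aemeasurable
    (mem_Icc_intCast_of_zero_or_one (P := P) h01)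
  convert h using 1
  · simp [integral_intCast_of_zero_or_one hY h01 hp hber]
  · rw [sub_zero, nnnorm_one]
    norm_num

end Bernoulli

lemma natCast_card_Icc {i l : ℤ} (h : i ≤ l + 1) : (#(Icc i l) : ℝ) = l - i + 1 := by
  rw [← Int.cast_natCast, Int.card_Icc_of_le i l h]
  push_cast
  ring

lemma cnt_sub_eq_sum (x : Config) (p : ℝ) {i l : ℤ} (h : i ≤ l + 1) :
    (cnt x i l : ℝ) - (l - i + 1) * p = ∑ r ∈ Icc i l, ((x r : ℝ) - p) := by
  rw [sum_sub_distrib, sum_const, nsmul_eq_mul, natCast_card_Icc h, cnt, Int.cast_sum]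

lemma two_mul_exp_le_six_mul_exp {n : ℝ} (hn : 0 < n) (t : ℝ) :
    2 * exp (-t ^ 2 / (2 * (n / 4))) ≤ 6 * exp (-2 * t ^ 2 / (9 * n)) := by
  have hexponent : -t ^ 2 / (2 * (n / 4)) ≤ -2 * t ^ 2 / (9 * n) := by
    rw [div_le_div_iff₀ (by positivity) (by positivity)]
    nlinarith [sq_nonneg t]
  nlinarith [exp_le_exp.2 hexponent, exp_pos (-2 * t ^ 2 / (9 * n))]

theorem stmt16_general {Ω : Type} [MeasurableSpace Ω] (P : Measure Ω) [IsProbabilityMeasure P]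
    (p : ℝ) (hp0 : 0 < p)
    (X : Ω → Config) (hconf : ∀ ω, IsConfig (X ω))
    (hmeas : ∀ i : ℤ, Measurable fun ω => X ω i)
    (hindep : iIndepFun (fun i ω => X ω i) P)
    (hber : ∀ i : ℤ, P {ω | X ω i = 1} = ENNReal.ofReal p)
    (i j : ℤ) (hij : i ≤ j) (t : ℝ) (ht : 0 < t) :
    P {ω | t < (Finset.Icc i j).sup' (Finset.nonempty_Icc.mpr hij)
          (fun l => |(cnt (X ω) i l : ℝ) - ((l : ℝ) - (i : ℝ) + 1) * p|)}
      ≤ ENNReal.ofReal (6 * Real.exp (-2 * t ^ 2 / (9 * ((j : ℝ) - (i : ℝ) + 1)))) := by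
  let Z (r : ℤ) (ω : Ω) : ℝ := (X ω r : ℝ) - p
  have hbound := measureReal_exists_le_abs_partialSum_le (Z := Z)
    (hindep.comp (fun _ z ↦ (z : ℝ) - p) fun _ ↦ measurable_of_countable _)
    (fun r ↦ (measurable_of_countable (fun z : ℤ ↦ (z : ℝ) - p)).comp (hmeas r))
    (fun r ↦ hasSubgaussianMGF_intCast_sub (hmeas r) (hconf · r) hp0.le (hber r))
    (fun r ↦ integral_intCast_sub_eq_zero (hmeas r) (hconf · r) hp0.le (hber r)) i j ht.le
  have hvar : ((∑ r ∈ Icc i j, (4⁻¹ : ℝ≥0) : ℝ≥0) : ℝ) = (j - i + 1) / 4 := by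
    rw [sum_const, nsmul_eq_mul]
    push_cast
    rw [natCast_card_Icc (by omega)]
    ring
  rw [hvar] at hbound
  have hsubset : {ω | t < (Icc i j).sup' (nonempty_Icc.mpr hij)
      (fun l => |(cnt (X ω) i l : ℝ) - ((l : ℝ) - (i : ℝ) + 1) * p|)} ⊆
        {ω | ∃ l ∈ Icc i j, t ≤ |∑ r ∈ Icc i l, Z r ω|} := by
    intro ω (hω : t < _)
    obtain ⟨l, hl, hlt⟩ := (lt_sup'_iff _).1 hω
    exact ⟨l, hl, by rw [← cnt_sub_eq_sum _ _ (by linarith [(mem_Icc.1 hl).1])]; exact hlt.le⟩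
  have hn : (0 : ℝ) < j - i + 1 := by linarith [(Int.cast_le (R := ℝ)).2 hij]
  calc _ ≤ P {ω | ∃ l ∈ Icc i j, t ≤ |∑ r ∈ Icc i l, Z r ω|} := measure_mono hsubset
    _ = ENNReal.ofReal (P.real {ω | ∃ l ∈ Icc i j, t ≤ |∑ r ∈ Icc i l, Z r ω|}) :=
        (ofReal_measureReal).symm
    _ ≤ _ := ENNReal.ofReal_le_ofReal (hbound.trans (two_mul_exp_le_six_mul_exp hn t))

/-- Maximal concentration bound for an i.i.d. Bernoulli(p) sequence:
`P(max_{l ∈ [i,j]} |x[i,l] − (l−i+1)p| > t) ≤ 6 exp(−2t²/(9(j−i+1)))`. -/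
theorem stmt16 {Ω : Type} [MeasurableSpace Ω] (P : Measure Ω) [IsProbabilityMeasure P]
    (p : ℝ) (hp0 : 0 < p) (hp1 : p < 1)
    (X : Ω → Config) (hconf : ∀ ω, IsConfig (X ω))
    (hmeas : ∀ i : ℤ, Measurable fun ω => X ω i)
    (hindep : iIndepFun (fun i ω => X ω i) P)
    (hber : ∀ i : ℤ, P {ω | X ω i = 1} = ENNReal.ofReal p)
    (i j : ℤ) (hij : i ≤ j) (t : ℝ) (ht : 0 < t) :
    P {ω | t < (Finset.Icc i j).sup' (Finset.nonempty_Icc.mpr hij)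
          (fun l => |(cnt (X ω) i l : ℝ) - ((l : ℝ) - (i : ℝ) + 1) * p|)}
      ≤ ENNReal.ofReal (6 * Real.exp (-2 * t ^ 2 / (9 * ((j : ℝ) - (i : ℝ) + 1)))) :=
  stmt16_general P p hp0 X hconf hmeas hindep hber i j hij t ht
end
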